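/- (Resonance classification for regular frequencies.) Let ξ̄, η̄, σ̄ ∈ ℝ×ℝ² and set ρ̄ = ξ̄ − η̄ − σ̄. Assume each of the three vectors η̄, σ̄, ρ̄ is regular, meaning v₀ ≠ 0 and 3v₀² ≠ |v|². If φ₃(ξ̄,η̄,σ̄) = 0, ∇_η̄ φ₃(ξ̄,η̄,σ̄) = 0 and ∇_σ̄ φ₃(ξ̄,η̄,σ̄) = 0, then at least one of the following holds: (η̄ + σ̄ = 0 and ρ̄ = ξ̄); or (σ̄ + ρ̄ = 0 and η̄ = ξ̄); or (η̄ + ρ̄ = 0 and σ̄ = ξ̄). -/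

import Mathlib

/-! The conditions `∇_η̄ φ₃ = ∇_σ̄ φ₃ = 0` say `∇ω(η̄) = ∇ω(σ̄) = ∇ω(ρ̄)`, where
`∇ω(v̄) = (3v₀² + |v|², 2v₀v)`. Away from `v₀ = 0` a fibre of `∇ω` through `ȳ` consists of `±ȳ`
and of the vectors `x̄` dual to `ȳ`: `|x|² = 3y₀²`, `|y|² = 3x₀²`, `x·y = 3x₀y₀`. So unless two of
`η̄, σ̄, ρ̄` are opposite, any two of them are equal or dual, and `φ₃ = 0` rules out every such
configuration with `ρ̄` regular: three equal vectors give `24 ω(ρ̄) = 0`; a vector `x̄` repeated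
next to a dual `ȳ` gives `(x₀ + y₀)³ = 0`, which makes both singular; and three pairwise dual
vectors force `3ρ₀² = |ρ|²`. -/

noncomputable section

/-- The frequency space `ℝ × ℝ²`, represented as Euclidean `ℝ³`:
coordinate `0` is `v₀` and coordinates `1, 2` form the spatial part `v`. -/
abbrev E3 : Type := EuclideanSpace ℝ (Fin 3)

/-- The dispersion relation `ω(v̄) = v₀(v₀² + |v|²)`. -/
def omega (v : E3) : ℝ := v 0 * ((v 0) ^ 2 + (v 1) ^ 2 + (v 2) ^ 2)

/-- The cubic phase `φ₃(ξ̄,η̄,σ̄) = ω(ξ̄) − ω(η̄) − ω(σ̄) − ω(ρ̄)` with `ρ̄ = ξ̄ − η̄ − σ̄`. -/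
def phi3 (ξ η σ : E3) : ℝ := omega ξ - omega η - omega σ - omega (ξ - η - σ)

/-- A frequency `v̄ = (v₀, v)` is regular when `v₀ ≠ 0` and `3v₀² ≠ |v|²`. -/
def IsRegular3 (v : E3) : Prop := v 0 ≠ 0 ∧ 3 * (v 0) ^ 2 ≠ (v 1) ^ 2 + (v 2) ^ 2

def gradOmega (v : E3) : E3 :=
  !₂[3 * v 0 ^ 2 + v 1 ^ 2 + v 2 ^ 2, 2 * v 0 * v 1, 2 * v 0 * v 2]

theorem E3.ext {x y : E3} (h0 : x 0 = y 0) (h1 : x 1 = y 1) (h2 : x 2 = y 2) : x = y := by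
  ext i
  fin_cases i <;> assumption

theorem gradOmega_eq_iff {x y : E3} :
    gradOmega x = gradOmega y ↔ 3 * x 0 ^ 2 + x 1 ^ 2 + x 2 ^ 2 = 3 * y 0 ^ 2 + y 1 ^ 2 + y 2 ^ 2 ∧
      x 0 * x 1 = y 0 * y 1 ∧ x 0 * x 2 = y 0 * y 2 := by
  simp [gradOmega, WithLp.ext_iff, Matrix.vecCons_inj, mul_assoc]

theorem hasGradientAt_omega (v : E3) : HasGradientAt omega (gradOmega v) v := by
  have hc (i : Fin 3) := PiLp.hasFDerivAt_apply (𝕜 := ℝ) 2 v i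
  have h := (hc 0).mul ((((hc 0).pow 2).add ((hc 1).pow 2)).add ((hc 2).pow 2))
  refine h.congr_fderiv ?_
  ext w
  simp only [Fin.isValue, Nat.add_one_sub_one, pow_one, nsmul_eq_mul, Nat.cast_ofNat, smul_add,
    Pi.add_apply, add_apply, smul_apply, PiLp.proj_apply, smul_eq_mul, gradOmega,
    InnerProductSpace.toDual_apply_apply, PiLp.inner_apply, RCLike.inner_apply, Real.ringHom_apply,
    Fin.sum_univ_three, Matrix.cons_val_zero, Matrix.cons_val_one, Matrix.cons_val]
  ring

theorem phi3_comm (ξ η σ : E3) : phi3 ξ η σ = phi3 ξ σ η := by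
  rw [phi3, phi3, sub_right_comm ξ η σ]
  ring

theorem hasGradientAt_phi3 (ξ η σ : E3) :
    HasGradientAt (fun η' => phi3 ξ η' σ) (gradOmega (ξ - η - σ) - gradOmega η) η := by
  have hρ : HasFDerivAt (fun η' : E3 => ξ - η' - σ) (-ContinuousLinearMap.id ℝ E3) η :=
    ((hasFDerivAt_id η).const_sub ξ).sub_const σ
  have h := ((hasFDerivAt_const (omega ξ) η).sub (hasGradientAt_omega η)).sub_const (omega σ)
    |>.sub (HasFDerivAt.comp (f := fun η' => ξ - η' - σ) η (hasGradientAt_omega _) hρ)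
  refine h.congr_fderiv ?_
  ext w
  simp only [zero_sub, ContinuousLinearMap.comp_neg, ContinuousLinearMap.comp_id, sub_neg_eq_add,
    add_apply, neg_apply, InnerProductSpace.toDual_apply_apply, map_sub, sub_apply]
  ring

def IsDual (x y : E3) : Prop :=
  x 1 ^ 2 + x 2 ^ 2 = 3 * y 0 ^ 2 ∧ y 1 ^ 2 + y 2 ^ 2 = 3 * x 0 ^ 2 ∧
    x 1 * y 1 + x 2 * y 2 = 3 * x 0 * y 0

theorem IsDual.symm {x y : E3} (h : IsDual x y) : IsDual y x :=
  ⟨h.2.1, h.1, by linear_combination h.2.2⟩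

theorem eq_or_eq_neg_or_isDual_of_gradOmega_eq {x y : E3} (hx : x 0 ≠ 0) (hy : y 0 ≠ 0)
    (h : gradOmega x = gradOmega y) : x = y ∨ x = -y ∨ IsDual x y := by
  obtain ⟨e0, e1, e2⟩ := gradOmega_eq_iff.mp h
  have hfactor : (x 0 - y 0) * (x 0 + y 0) * (3 * x 0 ^ 2 - (y 1 ^ 2 + y 2 ^ 2)) = 0 := by
    refine (mul_left_cancel₀ (pow_ne_zero 2 hy) ?_ : _ = (0 : ℝ))
    linear_combination (x 0 ^ 2 * y 0 ^ 2) * e0 - y 0 ^ 2 * (x 0 * x 1 + y 0 * y 1) * e1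
      - y 0 ^ 2 * (x 0 * x 2 + y 0 * y 2) * e2
  rcases mul_eq_zero.mp hfactor with hsum | hdual
  · rcases mul_eq_zero.mp hsum with hsub | hadd
    · left
      have h0 : x 0 = y 0 := sub_eq_zero.mp hsub
      refine E3.ext h0 (mul_left_cancel₀ hx ?_) (mul_left_cancel₀ hx ?_)
      · rw [e1, h0]
      · rw [e2, h0]
    · right; left
      have h0 : x 0 = -y 0 := eq_neg_of_add_eq_zero_left hadd
      refine E3.ext h0 (mul_left_cancel₀ hx ?_) (mul_left_cancel₀ hx ?_)
      · rw [PiLp.neg_apply, e1, h0]; ring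
      · rw [PiLp.neg_apply, e2, h0]; ring
  · right; right
    have hy' : y 1 ^ 2 + y 2 ^ 2 = 3 * x 0 ^ 2 := by linarith
    refine ⟨mul_left_cancel₀ (pow_ne_zero 2 hx) ?_, hy', mul_left_cancel₀ hx ?_⟩
    · linear_combination (x 0 * x 1 + y 0 * y 1) * e1 + (x 0 * x 2 + y 0 * y 2) * e2 + y 0 ^ 2 * hy'
    · linear_combination y 1 * e1 + y 2 * e2 + y 0 * hy'

theorem IsDual.coord_zero_add_eq_zero {x y : E3} (h : IsDual x y)
    (hω : omega (x + x + y) = omega x + omega x + omega y) : x 0 + y 0 = 0 := by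
  obtain ⟨hx, hy, hxy⟩ := h
  simp only [omega, PiLp.add_apply] at hω
  have hcube : (x 0 + y 0) ^ 3 = 0 := by
    linear_combination (1 / 12) * hω - ((6 * x 0 + 4 * y 0) / 12) * hx - (x 0 / 6) * hy
      - ((8 * x 0 + 4 * y 0) / 12) * hxy
  exact pow_eq_zero_iff (by norm_num) |>.mp hcube

theorem IsDual.not_isRegular {x y : E3} (h : IsDual x y)
    (hω : omega (x + x + y) = omega x + omega x + omega y) : ¬IsRegular3 x ∧ ¬IsRegular3 y := by
  have hyx : y 0 = -x 0 := eq_neg_of_add_eq_zero_right (h.coord_zero_add_eq_zero hω)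
  refine ⟨fun hx => hx.2 ?_, fun hy => hy.2 ?_⟩
  · rw [h.1, hyx]; ring
  · rw [h.2.1, hyx]; ring

theorem coord_zero_eq_zero_of_omega_add_add_self {x : E3}
    (hω : omega (x + x + x) = omega x + omega x + omega x) : x 0 = 0 := by
  simp only [omega, PiLp.add_apply] at hω
  have h : x 0 * (x 0 ^ 2 + x 1 ^ 2 + x 2 ^ 2) = 0 := by linear_combination hω / 24
  rcases mul_eq_zero.mp h with h0 | hnorm
  · exact h0
  · nlinarith [sq_nonneg (x 0), sq_nonneg (x 1), sq_nonneg (x 2)]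

theorem add_eq_zero_of_gradOmega_eq_of_omega_add {η σ ρ : E3} (hη : η 0 ≠ 0) (hσ : σ 0 ≠ 0)
    (hρ : IsRegular3 ρ) (hηρ : gradOmega η = gradOmega ρ) (hσρ : gradOmega σ = gradOmega ρ)
    (hω : omega (η + σ + ρ) = omega η + omega σ + omega ρ) :
    η + σ = 0 ∨ σ + ρ = 0 ∨ η + ρ = 0 := by
  rcases eq_or_eq_neg_or_isDual_of_gradOmega_eq hη hρ.1 hηρ with rfl | rfl | hdηρ
  · rcases eq_or_eq_neg_or_isDual_of_gradOmega_eq hσ hρ.1 hσρ with rfl | rfl | hdσρ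
    · exact absurd (coord_zero_eq_zero_of_omega_add_add_self hω) hρ.1
    · exact Or.inr (Or.inl (neg_add_cancel η))
    · refine absurd hρ (hdσρ.symm.not_isRegular ?_).1
      rw [add_right_comm]
      linarith
  · exact Or.inr (Or.inr (neg_add_cancel ρ))
  rcases eq_or_eq_neg_or_isDual_of_gradOmega_eq hσ hρ.1 hσρ with rfl | rfl | hdσρ
  · refine absurd hρ (hdηρ.symm.not_isRegular ?_).1
    rw [add_comm, ← add_assoc]
    linarith
  · exact Or.inr (Or.inl (neg_add_cancel ρ))
  rcases eq_or_eq_neg_or_isDual_of_gradOmega_eq hη hσ (hηρ.trans hσρ.symm) with rfl | rfl | hdησ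
  · exact absurd hρ (hdηρ.not_isRegular hω).2
  · exact Or.inl (neg_add_cancel σ)
  · exact absurd (by linarith [hdηρ.2.1, hdησ.2.1, hdσρ.1]) hρ.2

/-- resonance classification for regular frequencies: if `η̄, σ̄, ρ̄`
are regular and `φ₃ = 0`, `∇_η̄ φ₃ = 0`, `∇_σ̄ φ₃ = 0` at `(ξ̄,η̄,σ̄)`, then
`(η̄+σ̄ = 0 ∧ ρ̄ = ξ̄)` or `(σ̄+ρ̄ = 0 ∧ η̄ = ξ̄)` or `(η̄+ρ̄ = 0 ∧ σ̄ = ξ̄)`. -/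
theorem stmt_4 (ξ η σ ρ : E3) (hρdef : ρ = ξ - η - σ)
    (hη : IsRegular3 η) (hσ : IsRegular3 σ) (hρ : IsRegular3 ρ)
    (hphi : phi3 ξ η σ = 0)
    (hgradη : gradient (fun η' => phi3 ξ η' σ) η = 0)
    (hgradσ : gradient (fun σ' => phi3 ξ η σ') σ = 0) :
    (η + σ = 0 ∧ ρ = ξ) ∨ (σ + ρ = 0 ∧ η = ξ) ∨ (η + ρ = 0 ∧ σ = ξ) := by
  have hξ : ξ = η + σ + ρ := by rw [hρdef]; abel
  have hηρ : gradOmega η = gradOmega ρ := by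
    rw [(hasGradientAt_phi3 ξ η σ).gradient, ← hρdef, sub_eq_zero] at hgradη
    exact hgradη.symm
  have hσρ : gradOmega σ = gradOmega ρ := by
    simp only [phi3_comm ξ η] at hgradσ
    rw [(hasGradientAt_phi3 ξ σ η).gradient, sub_right_comm, ← hρdef, sub_eq_zero] at hgradσ
    exact hgradσ.symm
  have hω : omega (η + σ + ρ) = omega η + omega σ + omega ρ := by
    rw [phi3, ← hρdef, hξ] at hphi
    linarith
  rcases add_eq_zero_of_gradOmega_eq_of_omega_add hη.1 hσ.1 hρ hηρ hσρ hω with h | h | h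
  · exact Or.inl ⟨h, by rw [hξ, h, zero_add]⟩
  · exact Or.inr (Or.inl ⟨h, by rw [hξ, add_assoc, h, add_zero]⟩)
  · exact Or.inr (Or.inr ⟨h, by rw [hξ, add_right_comm, h, zero_add]⟩)
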